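/- Define, for μ ∈ ℝ and x, y > 0, ρ(y; x, μ) = (2π)^{-1/2} [e^{−(μ² + x² + y²)/2} / (e^{μ x} + e^{−μ x})] (e^{μ y} + e^{−μ y})(e^{x y} + e^{−x y}) (this is the transition probability density of the Markov chain (|W_n^μ|)_{n≥0}). Then for 0 ≤ μ' < μ'' and 0 < x' ≤ x'', the ratio y ↦ ρ(y; x'', μ'') / ρ(y; x', μ') is non-decreasing in y on (0,∞); equivalently, the functions y ↦ (e^{μ'' y} + e^{−μ'' y})/(e^{μ' y} + e^{−μ' y}) and y ↦ (e^{x'' y} + e^{−x'' y})/(e^{x' y} + e^{−x' y}) are both non-decreasing on (0,∞). Consequently, for 0 ≤ μ' < μ'' and 0 < x' ≤ x'', the probability density y ↦ ρ(y; x', μ') is smaller than y ↦ ρ(y; x'', μ'') in the likelihood ratio order, and hence ∫_b^∞ ρ(y; x', μ') dy ≤ ∫_b^∞ ρ(y; x'', μ'') dy for every b > 0. -/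

import Mathlib

/-!
Up to a factor depending only on `(x, μ)`, `ρ(y; x, μ)` is `e^{-y²/2} cosh(μy) cosh(xy)`, so the
likelihood ratio is a positive constant times the two ratios `cosh(by) / cosh(ay)` with
`0 ≤ a ≤ b`; each is non-decreasing on `[0, ∞)` by the product-to-sum formula for `cosh`.
Completing the square, `ρ(·; x, μ)` is the mixture, with weights `e^{±μx} / (e^{μx} + e^{-μx})`,
of the densities of `|N(x ± μ, 1)|`, so it has mass `1` on `(0, ∞)`; a monotone likelihood
ratio between two densities of equal mass orders their tails.
-/

open MeasureTheory Real

/-- The transition probability density of the Markov chain `(|W_n^μ|)_{n ≥ 0}`: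
`ρ(y; x, μ) = (2π)^{-1/2} [e^{−(μ² + x² + y²)/2} / (e^{μx} + e^{−μx})]
  (e^{μy} + e^{−μy})(e^{xy} + e^{−xy})`. -/
noncomputable def rho (y x μ : ℝ) : ℝ :=
  Real.rpow (2 * Real.pi) (-(1/2))
    * (Real.exp (-(μ ^ 2 + x ^ 2 + y ^ 2) / 2) / (Real.exp (μ * x) + Real.exp (-(μ * x))))
    * (Real.exp (μ * y) + Real.exp (-(μ * y)))
    * (Real.exp (x * y) + Real.exp (-(x * y)))

open ProbabilityTheory Set

namespace Real

lemma exp_add_exp_neg (t : ℝ) : exp t + exp (-t) = 2 * cosh t := by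
  rw [cosh_eq]; ring

lemma cosh_mul_cosh (u v : ℝ) : cosh u * cosh v = (cosh (u + v) + cosh (u - v)) / 2 := by
  rw [cosh_add, cosh_sub]; ring

/-- Cross-multiplied, this is `cosh (b y₁) cosh (a y₂) ≤ cosh (b y₂) cosh (a y₁)`; writing both
products as sums of `cosh`, each summand compares by `|·|`. -/
lemma monotoneOn_cosh_mul_div_cosh_mul {a b : ℝ} (ha : 0 ≤ a) (hab : a ≤ b) :
    MonotoneOn (fun y => cosh (b * y) / cosh (a * y)) (Ici 0) := by
  intro y₁ (hy₁ : 0 ≤ y₁) y₂ (hy₂ : 0 ≤ y₂) hy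
  dsimp only
  rw [div_le_div_iff₀ (cosh_pos _) (cosh_pos _), cosh_mul_cosh, cosh_mul_cosh]
  have hb : 0 ≤ b := ha.trans hab
  have hsum : cosh (b * y₁ + a * y₂) ≤ cosh (b * y₂ + a * y₁) := by
    rw [cosh_le_cosh]
    apply abs_le_abs
    · nlinarith [mul_nonneg (sub_nonneg.2 hab) (sub_nonneg.2 hy)]
    · nlinarith [mul_nonneg hb hy₁, mul_nonneg hb hy₂, mul_nonneg ha hy₁, mul_nonneg ha hy₂]
  have hdiff : cosh (b * y₁ - a * y₂) ≤ cosh (b * y₂ - a * y₁) := by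
    rw [cosh_le_cosh]
    apply abs_le_abs
    · nlinarith [mul_nonneg (add_nonneg ha hb) (sub_nonneg.2 hy)]
    · nlinarith [mul_nonneg (sub_nonneg.2 hab) (add_nonneg hy₁ hy₂)]
  linarith

lemma monotoneOn_exp_add_exp_neg_div {a b : ℝ} (ha : 0 ≤ a) (hab : a ≤ b) :
    MonotoneOn (fun y => (exp (b * y) + exp (-(b * y))) / (exp (a * y) + exp (-(a * y))))
      (Ici 0) := by
  simpa only [exp_add_exp_neg, mul_div_mul_left _ _ (two_ne_zero (α := ℝ))]
    using monotoneOn_cosh_mul_div_cosh_mul ha hab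

end Real

/-- If `g / f` is monotone, then `g ≥ f` beyond the point where the ratio reaches `1` and
`g ≤ f` before it; equal masses do the rest. -/
lemma setIntegral_Ioi_le_of_monotoneOn_div {f g : ℝ → ℝ} {a b : ℝ}
    (hf : IntegrableOn f (Ioi a)) (hg : IntegrableOn g (Ioi a)) (hf_pos : ∀ y ∈ Ioi a, 0 < f y)
    (hmass : ∫ y in Ioi a, f y = ∫ y in Ioi a, g y)
    (hmono : MonotoneOn (fun y => g y / f y) (Ioi a)) (hab : a < b) :
    ∫ y in Ioi b, f y ≤ ∫ y in Ioi b, g y := by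
  have hb : b ∈ Ioi a := hab
  have hsplit {h : ℝ → ℝ} (hh : IntegrableOn h (Ioi a)) :
      ∫ y in Ioi a, h y = (∫ y in Ioc a b, h y) + ∫ y in Ioi b, h y := by
    rw [← Ioc_union_Ioi_eq_Ioi hab.le, setIntegral_union (Ioc_disjoint_Ioi le_rfl)
      measurableSet_Ioi (hh.mono_set Ioc_subset_Ioi_self) (hh.mono_set (Ioi_subset_Ioi hab.le))]
  rcases le_or_gt 1 (g b / f b) with hgeb | hltb
  · refine setIntegral_mono_on (hf.mono_set (Ioi_subset_Ioi hab.le))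
      (hg.mono_set (Ioi_subset_Ioi hab.le)) measurableSet_Ioi fun y (hy : b < y) => ?_
    have hy' : y ∈ Ioi a := hab.trans hy
    exact (one_le_div (hf_pos y hy')).1 (hgeb.trans (hmono hb hy' hy.le))
  · have hle : ∫ y in Ioc a b, g y ≤ ∫ y in Ioc a b, f y :=
      setIntegral_mono_on (hg.mono_set Ioc_subset_Ioi_self) (hf.mono_set Ioc_subset_Ioi_self)
        measurableSet_Ioc fun y hy =>
          ((div_lt_one (hf_pos y hy.1)).1 ((hmono hy.1 hb hy.2).trans_lt hltb)).le
    linarith [hsplit hf, hsplit hg]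

lemma gaussianPDFReal_neg (m : ℝ) (v : NNReal) (y : ℝ) :
    gaussianPDFReal (-m) v y = gaussianPDFReal m v (-y) := by
  simp only [gaussianPDFReal]; ring_nf

/-- Density of `|Z|` on `(0, ∞)` for `Z ∼ 𝓝(m, v)`. -/
noncomputable def foldedGaussianPDFReal (m : ℝ) (v : NNReal) (y : ℝ) : ℝ :=
  gaussianPDFReal m v y + gaussianPDFReal (-m) v y

lemma integrable_foldedGaussianPDFReal (m : ℝ) (v : NNReal) :
    Integrable (foldedGaussianPDFReal m v) :=
  (integrable_gaussianPDFReal m v).add (integrable_gaussianPDFReal (-m) v)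

lemma setIntegral_Ioi_zero_foldedGaussianPDFReal (m : ℝ) {v : NNReal} (hv : v ≠ 0) :
    ∫ y in Ioi 0, foldedGaussianPDFReal m v y = 1 := by
  have hint := integrable_gaussianPDFReal m v
  simp only [foldedGaussianPDFReal, gaussianPDFReal_neg]
  rw [integral_add hint.integrableOn (hint.comp_neg).integrableOn,
    integral_comp_neg_Ioi (f := gaussianPDFReal m v), neg_zero, add_comm,
    intervalIntegral.integral_Iic_add_Ioi hint.integrableOn hint.integrableOn,
    integral_gaussianPDFReal_eq_one m hv]

lemma rho_eq_foldedGaussian_mixture (y x μ : ℝ) :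
    rho y x μ = (exp (μ * x) * foldedGaussianPDFReal (x + μ) 1 y
      + exp (-(μ * x)) * foldedGaussianPDFReal (x - μ) 1 y) / (exp (μ * x) + exp (-(μ * x))) := by
  have hnorm : Real.rpow (2 * π) (-(1 / 2)) = (√(2 * π * (1 : NNReal)))⁻¹ := by
    rw [NNReal.coe_one, mul_one, sqrt_eq_rpow, ← rpow_neg (by positivity)]; rfl
  simp only [rho, foldedGaussianPDFReal, gaussianPDFReal, hnorm, NNReal.coe_one]
  field_simp
  simp only [mul_add, add_mul, ← exp_add]
  ring_nf

lemma integrable_rho (x μ : ℝ) : Integrable (fun y => rho y x μ) := by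
  simp only [rho_eq_foldedGaussian_mixture]
  exact ((((integrable_foldedGaussianPDFReal _ _).const_mul _).add
    ((integrable_foldedGaussianPDFReal _ _).const_mul _)).div_const _)

lemma setIntegral_Ioi_zero_rho (x μ : ℝ) : ∫ y in Ioi 0, rho y x μ = 1 := by
  have hint := integrable_foldedGaussianPDFReal
  simp only [rho_eq_foldedGaussian_mixture]
  rw [integral_div, integral_add ((hint _ _).const_mul _).integrableOn
      ((hint _ _).const_mul _).integrableOn, integral_const_mul, integral_const_mul,
    setIntegral_Ioi_zero_foldedGaussianPDFReal _ one_ne_zero,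
    setIntegral_Ioi_zero_foldedGaussianPDFReal _ one_ne_zero, mul_one, mul_one,
    div_self (by positivity)]

lemma rho_pos (y x μ : ℝ) : 0 < rho y x μ := by
  have hnorm_pos : 0 < Real.rpow (2 * π) (-(1 / 2)) := rpow_pos_of_pos (by positivity) _
  unfold rho
  positivity

lemma rho_div_rho (y x' μ' x'' μ'' : ℝ) :
    rho y x'' μ'' / rho y x' μ' = rho 0 x'' μ'' / rho 0 x' μ'
      * ((exp (μ'' * y) + exp (-(μ'' * y))) / (exp (μ' * y) + exp (-(μ' * y))))
      * ((exp (x'' * y) + exp (-(x'' * y))) / (exp (x' * y) + exp (-(x' * y)))) := by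
  have hsplit (x μ : ℝ) : exp (-(μ ^ 2 + x ^ 2 + y ^ 2) / 2)
      = exp (-(μ ^ 2 + x ^ 2 + 0 ^ 2) / 2) * exp (-y ^ 2 / 2) := by
    rw [← exp_add]; ring_nf
  have hnorm_pos : 0 < Real.rpow (2 * π) (-(1 / 2)) := rpow_pos_of_pos (by positivity) _
  unfold rho
  rw [hsplit x'' μ'', hsplit x' μ']
  simp only [mul_zero, neg_zero, exp_zero]
  field_simp

lemma monotoneOn_rho_div_rho {x' x'' μ' μ'' : ℝ} (hμ' : 0 ≤ μ') (hμ : μ' ≤ μ'')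
    (hx' : 0 ≤ x') (hx : x' ≤ x'') :
    MonotoneOn (fun y => rho y x'' μ'' / rho y x' μ') (Ici 0) := by
  refine MonotoneOn.congr ?_ fun y _ => (rho_div_rho y x' μ' x'' μ'').symm
  have hc : 0 ≤ rho 0 x'' μ'' / rho 0 x' μ' := (div_pos (rho_pos _ _ _) (rho_pos _ _ _)).le
  refine (monotoneOn_const.mul (monotoneOn_exp_add_exp_neg_div hμ' hμ) (fun _ _ => hc) ?_).mul
    (monotoneOn_exp_add_exp_neg_div hx' hx) (fun _ _ => mul_nonneg hc ?_) ?_ <;>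
  · intros; positivity

/-- For `0 ≤ μ' < μ''` and `0 < x' ≤ x''`, the ratio `y ↦ ρ(y; x'', μ'')/ρ(y; x', μ')` is
non-decreasing on `(0,∞)`; equivalently the two factor ratios
`y ↦ (e^{μ''y} + e^{−μ''y})/(e^{μ'y} + e^{−μ'y})` and
`y ↦ (e^{x''y} + e^{−x''y})/(e^{x'y} + e^{−x'y})` are non-decreasing on `(0,∞)`.
Consequently `ρ(·; x', μ')` is smaller than `ρ(·; x'', μ'')` in the likelihood ratio order,
and hence `∫_b^∞ ρ(y; x', μ') dy ≤ ∫_b^∞ ρ(y; x'', μ'') dy` for every `b > 0`. -/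
theorem rho_likelihood_ratio_monotone
    (μ' μ'' x' x'' : ℝ) (hμ'0 : 0 ≤ μ') (hμ : μ' < μ'') (hx'0 : 0 < x') (hx : x' ≤ x'') :
    MonotoneOn (fun y => rho y x'' μ'' / rho y x' μ') (Set.Ioi (0 : ℝ)) ∧
    MonotoneOn (fun y =>
      (Real.exp (μ'' * y) + Real.exp (-(μ'' * y)))
        / (Real.exp (μ' * y) + Real.exp (-(μ' * y)))) (Set.Ioi (0 : ℝ)) ∧
    MonotoneOn (fun y =>
      (Real.exp (x'' * y) + Real.exp (-(x'' * y)))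
        / (Real.exp (x' * y) + Real.exp (-(x' * y)))) (Set.Ioi (0 : ℝ)) ∧
    ∀ b : ℝ, 0 < b →
      ∫ y in Set.Ioi b, rho y x' μ' ≤ ∫ y in Set.Ioi b, rho y x'' μ'' := by
  have hρ := (monotoneOn_rho_div_rho hμ'0 hμ.le hx'0.le hx).mono Ioi_subset_Ici_self
  refine ⟨hρ, (monotoneOn_exp_add_exp_neg_div hμ'0 hμ.le).mono Ioi_subset_Ici_self,
    (monotoneOn_exp_add_exp_neg_div hx'0.le hx).mono Ioi_subset_Ici_self, fun b hb => ?_⟩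
  exact setIntegral_Ioi_le_of_monotoneOn_div (integrable_rho x' μ').integrableOn
    (integrable_rho x'' μ'').integrableOn (fun y _ => rho_pos y x' μ')
    (by rw [setIntegral_Ioi_zero_rho, setIntegral_Ioi_zero_rho]) hρ hb
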